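/- (Proposition 2.1) Let P, Q and R be constructions whose root graphs are pairwise disjoint, let e_W and f_W be E-edges of the root graphs of P and Q respectively, and let e_E and f_E be W-edges of the root graphs of Q and R respectively (these edges are functional since root graphs of constructions are W-E-functional). Let G_1=(P[e_W-e_E]Q)[f_W-f_E]R and G_2=P[e_W-e_E](Q[f_W-f_E]R). Then G_1 is a construction if and only if G_2 is a construction; moreover the root graphs of G_1 and G_2 are the same, and YX(G_1)=YX(G_2) for every X in {W,E} and Y in {N,S}. -/
import Mathlib


namespace PluralCuts

/-- The two horizontal directions: west and east. -/
inductive XDir : Type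
  | W
  | E
deriving DecidableEq

/-- The two vertical directions: north and south. -/
inductive YDir : Type
  | N
  | S
deriving DecidableEq

/-- The other element of `{W, E}`. -/
def XDir.other : XDir → XDir
  | .W => .E
  | .E => .W

/-- A helper choosing between two values according to an `XDir`. -/
def pick {α : Type*} (w e : α) : XDir → α
  | .W => w
  | .E => e

/-- A digraph on (a finite set of) natural-number vertices: a finite set of
vertices together with a finite set of edges (ordered pairs). -/
structure DG : Type where
  verts : Finset ℕ
  edges : Finset (ℕ × ℕ)

namespace DG

/-- `D` is an oriented graph: edges lie between vertices, the edge relation is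
irreflexive and antisymmetric, and the vertex set is nonempty. -/
def IsOriented (D : DG) : Prop :=
  (∀ e ∈ D.edges, e.1 ∈ D.verts ∧ e.2 ∈ D.verts) ∧
  (∀ e ∈ D.edges, e.1 ≠ e.2) ∧
  (∀ a b : ℕ, (a, b) ∈ D.edges → (b, a) ∉ D.edges) ∧
  D.verts.Nonempty

/-- A `W`-vertex: no edge ends in it. -/
def isWVert (D : DG) (a : ℕ) : Prop := a ∈ D.verts ∧ ∀ b, (b, a) ∉ D.edges

/-- An `E`-vertex: no edge begins in it. -/
def isEVert (D : DG) (a : ℕ) : Prop := a ∈ D.verts ∧ ∀ b, (a, b) ∉ D.edges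

/-- An inner vertex: some edge ends in it and some edge begins in it. -/
def isInner (D : DG) (a : ℕ) : Prop :=
  a ∈ D.verts ∧ (∃ b, (b, a) ∈ D.edges) ∧ (∃ b, (a, b) ∈ D.edges)

/-- A `W`-edge: an edge beginning in a `W`-vertex. -/
def isWEdge (D : DG) (e : ℕ × ℕ) : Prop := e ∈ D.edges ∧ D.isWVert e.1

/-- An `E`-edge: an edge ending in an `E`-vertex. -/
def isEEdge (D : DG) (e : ℕ × ℕ) : Prop := e ∈ D.edges ∧ D.isEVert e.2

/-- An `X`-edge, for `X ∈ {W, E}`. -/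
def isXEdge (D : DG) : XDir → (ℕ × ℕ) → Prop
  | .W => D.isWEdge
  | .E => D.isEEdge

/-- An inner edge: it begins and ends in inner vertices. -/
def isInnerEdge (D : DG) (e : ℕ × ℕ) : Prop :=
  e ∈ D.edges ∧ D.isInner e.1 ∧ D.isInner e.2

/-- A functional `W`-edge `(a,b)`: `(a,c) ∈ D` implies `b = c`. -/
def funcWEdge (D : DG) (e : ℕ × ℕ) : Prop :=
  D.isWEdge e ∧ ∀ c, (e.1, c) ∈ D.edges → c = e.2

/-- A functional `E`-edge `(b,a)`: `(c,a) ∈ D` implies `b = c`. -/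
def funcEEdge (D : DG) (e : ℕ × ℕ) : Prop :=
  D.isEEdge e ∧ ∀ c, (c, e.2) ∈ D.edges → c = e.1

/-- `D` is `W`-`E`-functional: all its `W`-edges and `E`-edges are functional. -/
def WEFunctional (D : DG) : Prop :=
  (∀ e, D.isWEdge e → D.funcWEdge e) ∧ (∀ e, D.isEEdge e → D.funcEEdge e)

/-- Semi-adjacency: `(a,b)` or `(b,a)` is an edge. -/
def semiAdj (D : DG) (a b : ℕ) : Prop := (a, b) ∈ D.edges ∨ (b, a) ∈ D.edges

/-- A semipath: a nonempty sequence of mutually distinct vertices in which any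
two consecutive vertices are semi-adjacent. -/
def IsSemipath (D : DG) (l : List ℕ) : Prop :=
  l ≠ [] ∧ (∀ a ∈ l, a ∈ D.verts) ∧ l.Nodup ∧ l.Chain' D.semiAdj

/-- A path: a nonempty sequence of mutually distinct vertices in which
`(a_i, a_{i+1})` is an edge for consecutive vertices. -/
def IsPath (D : DG) (l : List ℕ) : Prop :=
  l ≠ [] ∧ (∀ a ∈ l, a ∈ D.verts) ∧ l.Nodup ∧
    l.Chain' (fun a b => (a, b) ∈ D.edges)

/-- A semicycle: a sequence `a_1, ..., a_n` of vertices with `n ≥ 4`,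
`a_1 = a_n`, `a_1, ..., a_{n-1}` mutually distinct, and consecutive vertices
semi-adjacent. -/
def IsSemicycle (D : DG) (l : List ℕ) : Prop :=
  4 ≤ l.length ∧ (∀ a ∈ l, a ∈ D.verts) ∧ l.head? = l.getLast? ∧
  l.dropLast.Nodup ∧ l.Chain' D.semiAdj

/-- `D` is weakly connected: every two vertices are joined by a semipath. -/
def WeaklyConnected (D : DG) : Prop :=
  ∀ a ∈ D.verts, ∀ b ∈ D.verts,
    ∃ l, D.IsSemipath l ∧ l.head? = some a ∧ l.getLast? = some b

/-- `D` is asemicyclic: it has no semicycles. -/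
def Asemicyclic (D : DG) : Prop := ∀ l, ¬ D.IsSemicycle l

/-- The cut `D_W[e_W - e_E]D_E`:
`(D_W - {e_W}) ∪ (D_E - {e_E}) ∪ {(e_W.1, e_E.2)}` on the union of the vertex
sets with `e_W.2` and `e_E.1` omitted. -/
def cut (DW DE : DG) (eW eE : ℕ × ℕ) : DG where
  verts := (DW.verts ∪ DE.verts) \ {eW.2, eE.1}
  edges := insert (eW.1, eE.2) ((DW.edges.erase eW) ∪ (DE.edges.erase eE))

end DG

/-- The type of assignments of four distinguished edges `NW, SW, NE, SE`. -/
abbrev DistE : Type := YDir → XDir → ℕ × ℕ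

/-- The type of labellings assigning to (inner) vertices four edges. -/
abbrev Lab : Type := ℕ → YDir → XDir → ℕ × ℕ

/-- `⟨D, ε⟩` is a basic K-graph: `D` is an oriented graph with a single inner
vertex `b`, all edges begin or end in `b`, every other vertex is joined to `b`
by an edge, there is at least one edge ending in `b` and one beginning in `b`,
the distinguished edges `ε Y W` end in `b` and `ε Y E` begin in `b`, and
(XYB): if there are at least two `X`-edges then `NX ≠ SX`. -/
def IsBasicK (D : DG) (ε : DistE) : Prop :=
  D.IsOriented ∧
  ∃ b ∈ D.verts,
    (∀ e ∈ D.edges, e.1 = b ∨ e.2 = b) ∧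
    (∀ v ∈ D.verts, v = b ∨ (v, b) ∈ D.edges ∨ (b, v) ∈ D.edges) ∧
    (∃ a, (a, b) ∈ D.edges) ∧ (∃ c, (b, c) ∈ D.edges) ∧
    (∀ Y : YDir, ε Y XDir.W ∈ D.edges ∧ (ε Y XDir.W).2 = b ∧
      ε Y XDir.E ∈ D.edges ∧ (ε Y XDir.E).1 = b) ∧
    (2 ≤ (D.edges.filter (fun e => e.2 = b)).card →
      ε YDir.N XDir.W ≠ ε YDir.S XDir.W) ∧
    (2 ≤ (D.edges.filter (fun e => e.1 = b)).card →
      ε YDir.N XDir.E ≠ ε YDir.S XDir.E)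

/-- `⟨D, ε⟩` is a basic Q-graph: as a basic K-graph but with no requirement
(XYB) on the distinguished edges. -/
def IsBasicQ (D : DG) (ε : DistE) : Prop :=
  D.IsOriented ∧
  ∃ b ∈ D.verts,
    (∀ e ∈ D.edges, e.1 = b ∨ e.2 = b) ∧
    (∀ v ∈ D.verts, v = b ∨ (v, b) ∈ D.edges ∨ (b, v) ∈ D.edges) ∧
    (∃ a, (a, b) ∈ D.edges) ∧ (∃ c, (b, c) ∈ D.edges) ∧
    (∀ Y : YDir, ε Y XDir.W ∈ D.edges ∧ (ε Y XDir.W).2 = b ∧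
      ε Y XDir.E ∈ D.edges ∧ (ε Y XDir.E).1 = b)

/-- Finite binary trees whose nodes carry an oriented graph, four
distinguished edges, and (at internal nodes) the two cut edges. -/
inductive CTree : Type
  | leaf (D : DG) (ε : DistE)
  | node (D : DG) (ε : DistE) (eW eE : ℕ × ℕ) (l r : CTree)

namespace CTree

/-- The graph at the root of the tree. -/
def rootGraph : CTree → DG
  | .leaf D _ => D
  | .node D _ _ _ _ _ => D

/-- The distinguished edges at the root of the tree. -/
def dist : CTree → DistE
  | .leaf _ ε => ε
  | .node _ ε _ _ _ _ => ε

/-- The list of graphs-with-distinguished-edges at the leaves of the tree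
(the basic K-graphs determining the leaves of a construction). -/
def leaves : CTree → List (DG × DistE)
  | .leaf D ε => [(D, ε)]
  | .node _ _ _ _ l r => l.leaves ++ r.leaves

end CTree

/-- The tree `G_W[e_W - e_E]G_E`, whose root graph is the cut of the root
graphs and whose distinguished edges are given by (XYD). -/
def mkNode (GW GE : CTree) (eW eE : ℕ × ℕ) : CTree :=
  .node (DG.cut GW.rootGraph GE.rootGraph eW eE)
    (fun Y X =>
      match X with
      | .W => if eE = GE.dist Y XDir.W then GW.dist Y XDir.W else GE.dist Y XDir.W
      | .E => if eW = GW.dist Y XDir.E then GE.dist Y XDir.E else GW.dist Y XDir.E)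
    eW eE GW GE

/-- The inductive notion of construction (of a global K-graph). -/
inductive IsConstruction : CTree → Prop
  | leaf (D : DG) (ε : DistE) (h : IsBasicK D ε) : IsConstruction (.leaf D ε)
  | node (D : DG) (ε : DistE) (eW eE : ℕ × ℕ) (GW GE : CTree)
      (hW : IsConstruction GW) (hE : IsConstruction GE)
      (hdisj : Disjoint GW.rootGraph.verts GE.rootGraph.verts)
      (heW : GW.rootGraph.funcEEdge eW)
      (heE : GE.rootGraph.funcWEdge eE)
      (hD : D = DG.cut GW.rootGraph GE.rootGraph eW eE)
      (hXYC : ∀ Y : YDir, eW = GW.dist Y XDir.E ∨ eE = GE.dist Y XDir.W)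
      (hεW : ∀ Y : YDir, ε Y XDir.W =
        if eE = GE.dist Y XDir.W then GW.dist Y XDir.W else GE.dist Y XDir.W)
      (hεE : ∀ Y : YDir, ε Y XDir.E =
        if eW = GW.dist Y XDir.E then GE.dist Y XDir.E else GW.dist Y XDir.E) :
      IsConstruction (.node D ε eW eE GW GE)

/-- The inductive notion of construction of a global Q-graph: as
`IsConstruction` but with basic Q-graphs at the leaves. -/
inductive IsConstructionQ : CTree → Prop
  | leaf (D : DG) (ε : DistE) (h : IsBasicQ D ε) : IsConstructionQ (.leaf D ε)
  | node (D : DG) (ε : DistE) (eW eE : ℕ × ℕ) (GW GE : CTree)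
      (hW : IsConstructionQ GW) (hE : IsConstructionQ GE)
      (hdisj : Disjoint GW.rootGraph.verts GE.rootGraph.verts)
      (heW : GW.rootGraph.funcEEdge eW)
      (heE : GE.rootGraph.funcWEdge eE)
      (hD : D = DG.cut GW.rootGraph GE.rootGraph eW eE)
      (hXYC : ∀ Y : YDir, eW = GW.dist Y XDir.E ∨ eE = GE.dist Y XDir.W)
      (hεW : ∀ Y : YDir, ε Y XDir.W =
        if eE = GE.dist Y XDir.W then GW.dist Y XDir.W else GE.dist Y XDir.W)
      (hεE : ∀ Y : YDir, ε Y XDir.E =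
        if eW = GW.dist Y XDir.E then GE.dist Y XDir.E else GW.dist Y XDir.E) :
      IsConstructionQ (.node D ε eW eE GW GE)

/-- ρ-equivalence of constructions: the least equivalence relation containing
ρ1, ρ2, ρ3 and closed under congruence with respect to cuts. -/
inductive RhoEquiv : CTree → CTree → Prop
  | rho1 (P Q R : CTree) (eW eE fW fE : ℕ × ℕ)
      (hP : IsConstruction P) (hQ : IsConstruction Q) (hR : IsConstruction R)
      (heW : P.rootGraph.isEEdge eW) (hfW : Q.rootGraph.isEEdge fW)
      (heE : Q.rootGraph.isWEdge eE) (hfE : R.rootGraph.isWEdge fE)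
      (h1 : IsConstruction (mkNode (mkNode P Q eW eE) R fW fE))
      (h2 : IsConstruction (mkNode P (mkNode Q R fW fE) eW eE)) :
      RhoEquiv (mkNode (mkNode P Q eW eE) R fW fE)
               (mkNode P (mkNode Q R fW fE) eW eE)
  | rho2 (P Q R : CTree) (eW eE fW fE : ℕ × ℕ)
      (hP : IsConstruction P) (hQ : IsConstruction Q) (hR : IsConstruction R)
      (heW : P.rootGraph.isEEdge eW) (hfW : P.rootGraph.isEEdge fW)
      (hne : eW ≠ fW)
      (heE : Q.rootGraph.isWEdge eE) (hfE : R.rootGraph.isWEdge fE)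
      (h1 : IsConstruction (mkNode (mkNode P Q eW eE) R fW fE))
      (h2 : IsConstruction (mkNode (mkNode P R fW fE) Q eW eE)) :
      RhoEquiv (mkNode (mkNode P Q eW eE) R fW fE)
               (mkNode (mkNode P R fW fE) Q eW eE)
  | rho3 (P Q R : CTree) (eW eE fW fE : ℕ × ℕ)
      (hP : IsConstruction P) (hQ : IsConstruction Q) (hR : IsConstruction R)
      (heE : P.rootGraph.isWEdge eE) (hfE : P.rootGraph.isWEdge fE)
      (hne : eE ≠ fE)
      (heW : Q.rootGraph.isEEdge eW) (hfW : R.rootGraph.isEEdge fW)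
      (h1 : IsConstruction (mkNode R (mkNode Q P eW eE) fW fE))
      (h2 : IsConstruction (mkNode Q (mkNode R P fW fE) eW eE)) :
      RhoEquiv (mkNode R (mkNode Q P eW eE) fW fE)
               (mkNode Q (mkNode R P fW fE) eW eE)
  | congr (G1 G2 H1 H2 : CTree) (eW eE : ℕ × ℕ)
      (h12 : RhoEquiv G1 G2) (h34 : RhoEquiv H1 H2)
      (hc1 : IsConstruction (mkNode G1 H1 eW eE))
      (hc2 : IsConstruction (mkNode G2 H2 eW eE)) :
      RhoEquiv (mkNode G1 H1 eW eE) (mkNode G2 H2 eW eE)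
  | refl (G : CTree) (h : IsConstruction G) : RhoEquiv G G
  | symm {G H : CTree} (h : RhoEquiv G H) : RhoEquiv H G
  | trans {G H K : CTree} (h1 : RhoEquiv G H) (h2 : RhoEquiv H K) :
      RhoEquiv G K

/-- The class `[G]`: all constructions with the same root graph as `G` whose
leaves are determined by the same basic K-graphs as those of `G`. -/
def classOf (G : CTree) : Set CTree :=
  {H | IsConstruction H ∧ H.rootGraph = G.rootGraph ∧
    ∀ p : DG × DistE, p ∈ H.leaves ↔ p ∈ G.leaves}

/-- Renaming the vertices of a digraph along a function. -/
def DG.rename (f : ℕ → ℕ) (D : DG) : DG where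
  verts := D.verts.image f
  edges := D.edges.image (fun e => (f e.1, f e.2))

/-- Renaming the vertices throughout a tree. -/
def CTree.rename (f : ℕ → ℕ) : CTree → CTree
  | .leaf D ε => .leaf (DG.rename f D) (fun Y X => (f (ε Y X).1, f (ε Y X).2))
  | .node D ε eW eE l r =>
      .node (DG.rename f D) (fun Y X => (f (ε Y X).1, f (ε Y X).2))
        (f eW.1, f eW.2) (f eE.1, f eE.2) (l.rename f) (r.rename f)

/-- σ-equivalence: `H` is obtained from `G` by a bijective renaming of
vertices that fixes the root vertices (so only secondary vertices may be
renamed). -/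
def SigmaEquiv (G H : CTree) : Prop :=
  ∃ f : ℕ ≃ ℕ, (∀ v ∈ G.rootGraph.verts, f v = v) ∧ H = G.rename f

/-- The global compass graph `‖G‖`: all constructions σ-equivalent to a
construction in `[G]`. -/
def normClass (G : CTree) : Set CTree :=
  {H | ∃ K ∈ classOf G, SigmaEquiv K H}

/-- The labelling `L` of `λ(G) = ⟨D, L⟩`, defined by induction on `G`: at a
leaf given by a basic K-graph with inner vertex `b`, `YX(b) = YX(B)`; at a
node, the value is inherited from the appropriate subtree unless it is one of
the two cut edges, in which case it is the new edge introduced by the cut. -/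
def lamG : CTree → Lab
  | .leaf _ ε => fun _ => ε
  | .node _ _ eW eE l r => fun a Y X =>
      let v := if a ∈ l.rootGraph.verts then lamG l a Y X else lamG r a Y X
      if v = eW ∨ v = eE then (eW.1, eE.2) else v

/-- `L` assigns to every inner vertex `a` edges `L a Y W` ending in `a` and
edges `L a Y E` beginning in `a`. -/
def ProperLab (D : DG) (L : Lab) : Prop :=
  ∀ a, D.isInner a → ∀ Y : YDir,
    L a Y XDir.W ∈ D.edges ∧ (L a Y XDir.W).2 = a ∧
    L a Y XDir.E ∈ D.edges ∧ (L a Y XDir.E).1 = a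

/-- `⟨D, L⟩` separates `N` from `S`. -/
def SeparatesNS (D : DG) (L : Lab) : Prop :=
  ∀ a, D.isInner a →
    (2 ≤ (D.edges.filter (fun e => e.2 = a)).card →
      L a YDir.N XDir.W ≠ L a YDir.S XDir.W) ∧
    (2 ≤ (D.edges.filter (fun e => e.1 = a)).card →
      L a YDir.N XDir.E ≠ L a YDir.S XDir.E)

/-- A list `a_1, ..., a_n` is `Y`-decent in `⟨D, L⟩`: `n = 1`, or
`YE(a_1) = (a_1, a_2)`, or `YW(a_n) = (a_{n-1}, a_n)`. -/
def Ydecent (L : Lab) (Y : YDir) (l : List ℕ) : Prop :=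
  ∀ a b t, l = a :: b :: t →
    (L a Y XDir.E = (a, b) ∨
      ∃ c d t', l.reverse = d :: c :: t' ∧ L d Y XDir.W = (c, d))

/-- `⟨D, L⟩` is a local compass graph. -/
def IsLocalCompass (D : DG) (L : Lab) : Prop :=
  D.IsOriented ∧ ProperLab D L ∧
  D.WeaklyConnected ∧ D.Asemicyclic ∧ D.WEFunctional ∧ (∃ a, D.isInner a) ∧
  SeparatesNS D L ∧
  (∀ l, D.IsPath l → Ydecent L YDir.N l ∧ Ydecent L YDir.S l)

/-- A path (list) covers an edge `g` when `g` is a pair of consecutive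
vertices of the list. -/
def covers (l : List ℕ) (g : ℕ × ℕ) : Prop := g ∈ l.zip l.tail

/-- A `YX`-edge in `⟨D, L⟩`. -/
def YXedge (D : DG) (L : Lab) (Y : YDir) : XDir → (ℕ × ℕ) → Prop
  | .W, g => g ∈ D.edges ∧ (L g.2 Y XDir.W = g ∨ D.isEEdge g)
  | .E, g => g ∈ D.edges ∧ (L g.1 Y XDir.E = g ∨ D.isWEdge g)

/-- A proper semipath: a semipath such that neither it nor its reverse is a
path. -/
def ProperSemipath (D : DG) (l : List ℕ) : Prop :=
  D.IsSemipath l ∧ ¬ D.IsPath l ∧ ¬ D.IsPath l.reverse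

/-- A transversal edge `(a,b)`: there is a proper semipath beginning with
`a, b` and a proper semipath beginning with `b, a`. -/
def Transversal (D : DG) (e : ℕ × ℕ) : Prop :=
  e ∈ D.edges ∧
  (∃ t, ProperSemipath D (e.1 :: e.2 :: t)) ∧
  (∃ t, ProperSemipath D (e.2 :: e.1 :: t))

/-- The edge of `D` that connects two semi-adjacent vertices `a` and `b`. -/
def connEdge (D : DG) (a b : ℕ) : ℕ × ℕ :=
  if (a, b) ∈ D.edges then (a, b) else (b, a)

/-- The connecting edges of a list: the edges connecting its consecutive
vertices. -/
def connEdges (D : DG) (l : List ℕ) (e : ℕ × ℕ) : Prop :=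
  ∃ p ∈ l.zip l.tail, e = connEdge D p.1 p.2

/-- A bifurcation: three distinct edges with a common vertex. -/
def Bifurcation (D : DG) (e1 e2 e3 : ℕ × ℕ) : Prop :=
  e1 ∈ D.edges ∧ e2 ∈ D.edges ∧ e3 ∈ D.edges ∧
  e1 ≠ e2 ∧ e1 ≠ e3 ∧ e2 ≠ e3 ∧
  ∃ v, (v = e1.1 ∨ v = e1.2) ∧ (v = e2.1 ∨ v = e2.2) ∧ (v = e3.1 ∨ v = e3.2)

/-- A K-graph: a weakly connected, asemicyclic, `W`-`E`-functional oriented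
graph with an inner vertex in which no bifurcation is transversal. -/
def IsKGraph (D : DG) : Prop :=
  D.IsOriented ∧ D.WeaklyConnected ∧ D.Asemicyclic ∧ D.WEFunctional ∧
  (∃ a, D.isInner a) ∧
  ∀ e1 e2 e3, Bifurcation D e1 e2 e3 →
    ¬ (Transversal D e1 ∧ Transversal D e2 ∧ Transversal D e3)

/-- A Q-graph: a weakly connected, asemicyclic, `W`-`E`-functional oriented
graph with an inner vertex. -/
def IsQGraph (D : DG) : Prop :=
  D.IsOriented ∧ D.WeaklyConnected ∧ D.Asemicyclic ∧ D.WEFunctional ∧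
  ∃ a, D.isInner a


namespace PCAux

open DG

lemma DG_ext {A B : DG} (h1 : A.verts = B.verts) (h2 : A.edges = B.edges) : A = B := by
  cases A; cases B; simp_all

lemma mem_cut_verts {DW DE : DG} {eW eE : ℕ × ℕ} {a : ℕ} :
    a ∈ (DG.cut DW DE eW eE).verts ↔
      (a ∈ DW.verts ∨ a ∈ DE.verts) ∧ a ≠ eW.2 ∧ a ≠ eE.1 := by
  simp [DG.cut, not_or]

lemma mem_cut_edges {DW DE : DG} {eW eE : ℕ × ℕ} {e : ℕ × ℕ} :
    e ∈ (DG.cut DW DE eW eE).edges ↔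
      e = (eW.1, eE.2) ∨ (e ∈ DW.edges ∧ e ≠ eW) ∨ (e ∈ DE.edges ∧ e ≠ eE) := by
  simp [DG.cut, Finset.mem_erase, and_comm]

/-- If `f` is a functional E-edge and `e` an edge with the same endpoint, then `e = f`. -/
lemma eq_of_funcE {D : DG} {e f : ℕ × ℕ} (hf : D.funcEEdge f) (he : e ∈ D.edges)
    (h2 : e.2 = f.2) : e = f := by
  have he' : (e.1, f.2) ∈ D.edges := by rw [← h2]; simpa using he
  exact Prod.ext (hf.2 e.1 he') h2

lemma eq_of_funcW {D : DG} {e f : ℕ × ℕ} (hf : D.funcWEdge f) (he : e ∈ D.edges)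
    (h1 : e.1 = f.1) : e = f := by
  have he' : (f.1, e.2) ∈ D.edges := by rw [← h1]; simpa using he
  exact Prod.ext h1 (hf.2 e.2 he')

lemma snd_mem_of_edge {D : DG} (hD : D.IsOriented) {a b : ℕ} (h : (a, b) ∈ D.edges) :
    b ∈ D.verts := (hD.1 _ h).2

lemma fst_mem_of_edge {D : DG} (hD : D.IsOriented) {a b : ℕ} (h : (a, b) ∈ D.edges) :
    a ∈ D.verts := (hD.1 _ h).1

lemma cut_oriented {DW DE : DG} {eW eE : ℕ × ℕ}
    (hW : DW.IsOriented) (hE : DE.IsOriented)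
    (hd : Disjoint DW.verts DE.verts)
    (heW : DW.funcEEdge eW) (heE : DE.funcWEdge eE) :
    (DG.cut DW DE eW eE).IsOriented := by
  have hd' := Finset.disjoint_left.mp hd
  obtain ⟨hW1, hW2, hW3, hW4⟩ := hW
  obtain ⟨hE1, hE2, hE3, hE4⟩ := hE
  have heWm : eW ∈ DW.edges := heW.1.1
  have heEm : eE ∈ DE.edges := heE.1.1
  have heW1 : eW.1 ∈ DW.verts := (hW1 _ heWm).1
  have heW2 : eW.2 ∈ DW.verts := (hW1 _ heWm).2
  have heE1 : eE.1 ∈ DE.verts := (hE1 _ heEm).1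
  have heE2 : eE.2 ∈ DE.verts := (hE1 _ heEm).2
  refine ⟨?_, ?_, ?_, ?_⟩
  · intro e he
    rcases mem_cut_edges.mp he with h | ⟨h, hne⟩ | ⟨h, hne⟩
    · subst h
      constructor
      · exact mem_cut_verts.mpr ⟨Or.inl heW1, hW2 _ heWm, fun hc => hd' (hc ▸ heW1) heE1⟩
      · exact mem_cut_verts.mpr ⟨Or.inr heE2, fun hc => hd' heW2 (hc ▸ heE2),
          fun hc => hE2 _ heEm hc.symm⟩
    · constructor
      · refine mem_cut_verts.mpr ⟨Or.inl (hW1 _ h).1, ?_, fun hc => hd' (hc ▸ (hW1 _ h).1) heE1⟩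
        intro hc
        exact heW.1.2.2 e.2 (by rw [← hc]; simpa using h)
      · exact mem_cut_verts.mpr ⟨Or.inl (hW1 _ h).2,
          fun hc => hne (eq_of_funcE heW h hc), fun hc => hd' (hc ▸ (hW1 _ h).2) heE1⟩
    · constructor
      · exact mem_cut_verts.mpr ⟨Or.inr (hE1 _ h).1,
          fun hc => hd' heW2 (hc ▸ (hE1 _ h).1), fun hc => hne (eq_of_funcW heE h hc)⟩
      · refine mem_cut_verts.mpr ⟨Or.inr (hE1 _ h).2, fun hc => hd' heW2 (hc ▸ (hE1 _ h).2), ?_⟩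
        intro hc
        exact heE.1.2.2 e.1 (by rw [← hc]; simpa using h)
  · intro e he
    rcases mem_cut_edges.mp he with h | ⟨h, _⟩ | ⟨h, _⟩
    · subst h; exact fun hc => hd' heW1 (hc ▸ heE2)
    · exact hW2 _ h
    · exact hE2 _ h
  · intro a b hab hba
    rcases mem_cut_edges.mp hab with h | ⟨h, _⟩ | ⟨h, _⟩
    · obtain ⟨h1, h2⟩ : a = eW.1 ∧ b = eE.2 := Prod.mk.injEq .. ▸ h
      subst h1; subst h2
      rcases mem_cut_edges.mp hba with h' | ⟨h', _⟩ | ⟨h', _⟩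
      · obtain ⟨h1', h2'⟩ : eE.2 = eW.1 ∧ eW.1 = eE.2 := Prod.mk.injEq .. ▸ h'
        exact hd' (h1' ▸ heW1) heE2
      · exact hd' (fst_mem_of_edge ⟨hW1, hW2, hW3, hW4⟩ h') heE2
      · exact hd' heW1 (snd_mem_of_edge ⟨hE1, hE2, hE3, hE4⟩ h')
    · have ha : a ∈ DW.verts := fst_mem_of_edge ⟨hW1, hW2, hW3, hW4⟩ h
      have hb : b ∈ DW.verts := snd_mem_of_edge ⟨hW1, hW2, hW3, hW4⟩ h
      rcases mem_cut_edges.mp hba with h' | ⟨h', _⟩ | ⟨h', _⟩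
      · obtain ⟨h1', h2'⟩ : b = eW.1 ∧ a = eE.2 := Prod.mk.injEq .. ▸ h'
        exact hd' ha (h2' ▸ heE2)
      · exact hW3 a b h h'
      · exact hd' hb (fst_mem_of_edge ⟨hE1, hE2, hE3, hE4⟩ h')
    · have ha : a ∈ DE.verts := fst_mem_of_edge ⟨hE1, hE2, hE3, hE4⟩ h
      have hb : b ∈ DE.verts := snd_mem_of_edge ⟨hE1, hE2, hE3, hE4⟩ h
      rcases mem_cut_edges.mp hba with h' | ⟨h', _⟩ | ⟨h', _⟩
      · obtain ⟨h1', h2'⟩ : b = eW.1 ∧ a = eE.2 := Prod.mk.injEq .. ▸ h'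
        exact hd' (h1' ▸ heW1) hb
      · exact hd' (snd_mem_of_edge ⟨hW1, hW2, hW3, hW4⟩ h') ha
      · exact hE3 a b h h'
  · exact ⟨eW.1, mem_cut_verts.mpr ⟨Or.inl heW1, hW2 _ heWm, fun hc => hd' (hc ▸ heW1) heE1⟩⟩

end PCAux

namespace PCAux

open DG

lemma oriented_of_construction {G : CTree} (h : IsConstruction G) :
    G.rootGraph.IsOriented := by
  induction h with
  | leaf D ε hB => exact hB.1
  | node D ε eW eE GW GE hW hE hdisj heW heE hD hXYC hεW hεE ihW ihE =>
    show D.IsOriented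
    rw [hD]
    exact cut_oriented ihW ihE hdisj heW heE

/-- Any two edges leaving a `W`-vertex of a `W`-`E`-functional digraph coincide. -/
lemma out_unique {D : DG} (hf : D.WEFunctional) {v : ℕ} (hv : D.isWVert v) {c d : ℕ}
    (hc : (v, c) ∈ D.edges) (hd : (v, d) ∈ D.edges) : c = d :=
  (hf.1 (v, d) ⟨hd, hv⟩).2 c hc

/-- Any two edges entering an `E`-vertex of a `W`-`E`-functional digraph coincide. -/
lemma in_unique {D : DG} (hf : D.WEFunctional) {v : ℕ} (hv : D.isEVert v) {c d : ℕ}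
    (hc : (c, v) ∈ D.edges) (hd : (d, v) ∈ D.edges) : c = d :=
  (hf.2 (d, v) ⟨hd, hv⟩).2 c hc

lemma cut_wef {DW DE : DG} {eW eE : ℕ × ℕ}
    (hWo : DW.IsOriented) (hEo : DE.IsOriented)
    (hWf : DW.WEFunctional) (hEf : DE.WEFunctional)
    (hd : Disjoint DW.verts DE.verts)
    (heW : DW.funcEEdge eW) (heE : DE.funcWEdge eE) :
    (DG.cut DW DE eW eE).WEFunctional := by
  have hd' := Finset.disjoint_left.mp hd
  have heWm : eW ∈ DW.edges := heW.1.1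
  have heEm : eE ∈ DE.edges := heE.1.1
  constructor
  · -- W-edges are functional
    rintro g ⟨hg, hgv, hgW⟩
    refine ⟨⟨hg, hgv, hgW⟩, ?_⟩
    have hg' : (g.1, g.2) ∈ (DG.cut DW DE eW eE).edges := by simpa using hg
    intro c hc
    rcases (mem_cut_verts.mp hgv).1 with hg1W | hg1E
    · -- g.1 ∈ DW.verts; g.1 is a W-vertex of DW
      have hWvert : DW.isWVert g.1 := by
        refine ⟨hg1W, fun b hb => ?_⟩
        have hbne : (b, g.1) ≠ eW := fun hc' =>
          (mem_cut_verts.mp hgv).2.1 (congrArg Prod.snd hc')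
        exact hgW b (mem_cut_edges.mpr (Or.inr (Or.inl ⟨hb, hbne⟩)))
      have key : ∀ x, (g.1, x) ∈ (DG.cut DW DE eW eE).edges →
          (g.1 = eW.1 ∧ x = eE.2) ∨ ((g.1, x) ∈ DW.edges ∧ (g.1, x) ≠ eW) := by
        intro x hx
        rcases mem_cut_edges.mp hx with h | h | h
        · exact Or.inl ⟨(Prod.ext_iff.mp h).1, (Prod.ext_iff.mp h).2⟩
        · exact Or.inr h
        · exact absurd (hEo.1 _ h.1).1 (hd' hg1W)
      rcases key c hc with ⟨h1, h2⟩ | ⟨h1, h2⟩ <;>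
        rcases key g.2 hg' with ⟨h1', h2'⟩ | ⟨h1', h2'⟩
      · rw [h2, h2']
      · exfalso
        have hw2 : g.2 = eW.2 := out_unique hWf hWvert h1'
          (show (g.1, eW.2) ∈ DW.edges by rw [h1]; simpa using heWm)
        exact h2' (Prod.ext_iff.mpr ⟨h1, hw2⟩)
      · exfalso
        have hw2 : c = eW.2 := out_unique hWf hWvert h1
          (show (g.1, eW.2) ∈ DW.edges by rw [h1']; simpa using heWm)
        exact h2 (Prod.ext_iff.mpr ⟨h1', hw2⟩)
      · exact out_unique hWf hWvert h1 h1'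
    · -- g.1 ∈ DE.verts; g.1 is a W-vertex of DE
      have hg1W : g.1 ∉ DW.verts := fun hm => hd' hm hg1E
      have hWvert : DE.isWVert g.1 := by
        refine ⟨hg1E, fun b hb => ?_⟩
        by_cases hbe : (b, g.1) = eE
        · exact hgW eW.1 (mem_cut_edges.mpr (Or.inl
            (congrArg (Prod.mk eW.1) (congrArg Prod.snd hbe))))
        · exact hgW b (mem_cut_edges.mpr (Or.inr (Or.inr ⟨hb, hbe⟩)))
      have key : ∀ x, (g.1, x) ∈ (DG.cut DW DE eW eE).edges → (g.1, x) ∈ DE.edges := by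
        intro x hx
        rcases mem_cut_edges.mp hx with h | h | h
        · exact absurd ((Prod.ext_iff.mp h).1 ▸ hg1E) (fun hm => hd' (hWo.1 _ heWm).1 hm)
        · exact absurd (hWo.1 _ h.1).1 hg1W
        · exact h.1
      exact out_unique hEf hWvert (key c hc) (key g.2 hg')
  · -- E-edges are functional
    rintro g ⟨hg, hgv, hgE⟩
    refine ⟨⟨hg, hgv, hgE⟩, ?_⟩
    have hg' : (g.1, g.2) ∈ (DG.cut DW DE eW eE).edges := by simpa using hg
    intro c hc
    rcases (mem_cut_verts.mp hgv).1 with hg2W | hg2E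
    · -- g.2 ∈ DW.verts; g.2 is an E-vertex of DW
      have hg2E' : g.2 ∉ DE.verts := fun hm => hd' hg2W hm
      have hEvert : DW.isEVert g.2 := by
        refine ⟨hg2W, fun b hb => ?_⟩
        by_cases hbe : (g.2, b) = eW
        · exact hgE eE.2 (mem_cut_edges.mpr (Or.inl
            (congrArg (fun t => (t, eE.2)) (congrArg Prod.fst hbe))))
        · exact hgE b (mem_cut_edges.mpr (Or.inr (Or.inl ⟨hb, hbe⟩)))
      have key : ∀ x, (x, g.2) ∈ (DG.cut DW DE eW eE).edges → (x, g.2) ∈ DW.edges := by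
        intro x hx
        rcases mem_cut_edges.mp hx with h | h | h
        · exact absurd ((Prod.ext_iff.mp h).2 ▸ hg2W) (fun hm => hd' hm (hEo.1 _ heEm).2)
        · exact h.1
        · exact absurd (hEo.1 _ h.1).2 hg2E'
      exact in_unique hWf hEvert (key c hc) (key g.1 hg')
    · -- g.2 ∈ DE.verts; g.2 is an E-vertex of DE
      have hEvert : DE.isEVert g.2 := by
        refine ⟨hg2E, fun b hb => ?_⟩
        have hbne : (g.2, b) ≠ eE := fun hc' =>
          (mem_cut_verts.mp hgv).2.2 (congrArg Prod.fst hc')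
        exact hgE b (mem_cut_edges.mpr (Or.inr (Or.inr ⟨hb, hbne⟩)))
      have key : ∀ x, (x, g.2) ∈ (DG.cut DW DE eW eE).edges →
          (x = eW.1 ∧ g.2 = eE.2) ∨ ((x, g.2) ∈ DE.edges ∧ (x, g.2) ≠ eE) := by
        intro x hx
        rcases mem_cut_edges.mp hx with h | h | h
        · exact Or.inl ⟨(Prod.ext_iff.mp h).1, (Prod.ext_iff.mp h).2⟩
        · exact absurd (hWo.1 _ h.1).2 (fun hm => hd' hm hg2E)
        · exact Or.inr h
      rcases key c hc with ⟨h1, h2⟩ | ⟨h1, h2⟩ <;>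
        rcases key g.1 hg' with ⟨h1', h2'⟩ | ⟨h1', h2'⟩
      · rw [h1, h1']
      · exfalso
        have hw1 : g.1 = eE.1 := in_unique hEf hEvert h1'
          (show (eE.1, g.2) ∈ DE.edges by rw [h2]; simpa using heEm)
        exact h2' (Prod.ext_iff.mpr ⟨hw1, h2⟩)
      · exfalso
        have hw1 : c = eE.1 := in_unique hEf hEvert h1
          (show (eE.1, g.2) ∈ DE.edges by rw [h2']; simpa using heEm)
        exact h2 (Prod.ext_iff.mpr ⟨hw1, h2'⟩)
      · exact in_unique hEf hEvert h1 h1'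

lemma wef_of_construction {G : CTree} (h : IsConstruction G) :
    G.rootGraph.WEFunctional := by
  induction h with
  | leaf D ε hB =>
    obtain ⟨hor, b, hb, hall, hjoin, ⟨a0, ha0⟩, ⟨c0, hc0⟩, hdist, hNW, hNE⟩ := hB
    constructor
    · rintro ⟨v, w⟩ ⟨hm, hvv, hvin⟩
      refine ⟨⟨hm, hvv, hvin⟩, ?_⟩
      have hvb : v ≠ b := fun h => hvin a0 (by rw [h]; exact ha0)
      have hwb : w = b := (hall (v, w) hm).resolve_left hvb
      intro c hc
      rw [hwb]
      exact (hall (v, c) hc).resolve_left hvb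
    · rintro ⟨v, w⟩ ⟨hm, hwv, hwout⟩
      refine ⟨⟨hm, hwv, hwout⟩, ?_⟩
      have hwb : w ≠ b := fun h => hwout c0 (by rw [h]; exact hc0)
      have hvb : v = b := (hall (v, w) hm).resolve_right hwb
      intro c hc
      rw [hvb]
      exact (hall (c, w) hc).resolve_right hwb
  | node D ε eW eE GW GE hW hE hdisj heW heE hD hXYC hεW hεE ihW ihE =>
    show D.WEFunctional
    rw [hD]
    exact cut_wef (oriented_of_construction hW) (oriented_of_construction hE) ihW ihE hdisj heW heE

end PCAux

namespace PCAux

open DG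

/-- The distinguished `W`-edges of a construction are `W`-edges of the root graph whose
endpoint has an outgoing edge, and dually for the distinguished `E`-edges. -/
lemma dist_spec {G : CTree} (h : IsConstruction G) (Y : YDir) :
    (G.rootGraph.isWEdge (G.dist Y XDir.W) ∧
      ∃ c, ((G.dist Y XDir.W).2, c) ∈ G.rootGraph.edges) ∧
    (G.rootGraph.isEEdge (G.dist Y XDir.E) ∧
      ∃ c, (c, (G.dist Y XDir.E).1) ∈ G.rootGraph.edges) := by
  induction h with
  | leaf D ε hB =>
    obtain ⟨hor, b, hb, hall, hjoin, ⟨a0, ha0⟩, ⟨c0, hc0⟩, hdist, hNW, hNE⟩ := hB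
    obtain ⟨hWm, hW2, hEm, hE1⟩ := hdist Y
    simp only [CTree.dist, CTree.rootGraph]
    constructor
    · constructor
      · refine ⟨hWm, (hor.1 _ hWm).1, fun x hx => ?_⟩
        have hab : (ε Y XDir.W).1 ≠ b := by
          intro hc
          exact hor.2.1 _ hWm (hc.trans hW2.symm)
        have hxb : x = b := (hall _ hx).resolve_right hab
        have hmem : ((ε Y XDir.W).1, b) ∈ D.edges := by
          rw [← hW2]; simpa using hWm
        exact hor.2.2.1 _ _ hmem (by rw [← hxb]; exact hx)
      · exact ⟨c0, by rw [hW2]; exact hc0⟩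
    · constructor
      · refine ⟨hEm, (hor.1 _ hEm).2, fun x hx => ?_⟩
        have hab : (ε Y XDir.E).2 ≠ b := by
          intro hc
          exact hor.2.1 _ hEm (hE1.trans hc.symm)
        have hxb : x = b := (hall _ hx).resolve_left hab
        have hmem : (b, (ε Y XDir.E).2) ∈ D.edges := by
          rw [← hE1]; simpa using hEm
        exact hor.2.2.1 _ _ hmem (by rw [← hxb]; exact hx)
      · exact ⟨a0, by rw [hE1]; exact ha0⟩
  | node D ε eW eE GW GE hW hE hdisj heW heE hD hXYC hεW hεE ihW ihE =>
    set A := GW.rootGraph with hA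
    set B := GE.rootGraph with hB
    have hAo := oriented_of_construction hW
    have hBo := oriented_of_construction hE
    have hd' := Finset.disjoint_left.mp hdisj
    have heWm : eW ∈ A.edges := heW.1.1
    have heEm : eE ∈ B.edges := heE.1.1
    subst hD
    constructor
    · -- the W-part
      have hεW' : (CTree.node (DG.cut A B eW eE) ε eW eE GW GE).dist Y XDir.W
          = if eE = GE.dist Y XDir.W then GW.dist Y XDir.W else GE.dist Y XDir.W := hεW Y
      rw [show (CTree.node (DG.cut A B eW eE) ε eW eE GW GE).rootGraph = DG.cut A B eW eE
        from rfl, hεW']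
      by_cases heq : eE = GE.dist Y XDir.W
      · rw [if_pos heq]
        obtain ⟨⟨hm, hv1, hvin⟩, c, hout⟩ := (ihW).1
        set g := GW.dist Y XDir.W with hg
        have hne : g ≠ eW := by
          intro hc
          exact heW.1.2.2 c (by rw [← hc]; exact hout)
        constructor
        · refine ⟨mem_cut_edges.mpr (Or.inr (Or.inl ⟨hm, hne⟩)), mem_cut_verts.mpr
            ⟨Or.inl hv1, ?_, fun hc => hd' (hc ▸ hv1) (hBo.1 _ heEm).1⟩, ?_⟩
          · intro hc
            exact hvin eW.1 (by rw [hc]; simpa using heWm)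
          · intro x hx
            rcases mem_cut_edges.mp hx with h | h | h
            · have h2 : g.1 = eE.2 := (Prod.ext_iff.mp h).2
              exact hd' hv1 (by rw [h2]; exact (hBo.1 _ heEm).2)
            · exact hvin x h.1
            · exact hd' hv1 (hBo.1 _ h.1).2
        · by_cases hce : (g.2, c) = eW
          · exact ⟨eE.2, mem_cut_edges.mpr (Or.inl
              (congrArg (fun t => (t, eE.2)) (congrArg Prod.fst hce)))⟩
          · exact ⟨c, mem_cut_edges.mpr (Or.inr (Or.inl ⟨hout, hce⟩))⟩
      · rw [if_neg heq]
        obtain ⟨⟨hm, hv1, hvin⟩, c, hout⟩ := (ihE).1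
        set g := GE.dist Y XDir.W with hg
        have hne : g ≠ eE := fun hc => heq hc.symm
        constructor
        · refine ⟨mem_cut_edges.mpr (Or.inr (Or.inr ⟨hm, hne⟩)), mem_cut_verts.mpr
            ⟨Or.inr hv1, fun hc => hd' (hAo.1 _ heWm).2 (hc ▸ hv1), ?_⟩, ?_⟩
          · intro hc
            exact hne (eq_of_funcW heE hm hc)
          · intro x hx
            rcases mem_cut_edges.mp hx with h | h | h
            · refine hvin eE.1 ?_
              have : g.1 = eE.2 := (Prod.ext_iff.mp h).2
              rw [this]; simpa using heEm
            · exact hd' (hAo.1 _ h.1).2 hv1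
            · exact hvin x h.1
        · refine ⟨c, mem_cut_edges.mpr (Or.inr (Or.inr ⟨hout, ?_⟩))⟩
          intro hc
          have h1 : g.2 = eE.1 := (Prod.ext_iff.mp hc).1
          exact heE.1.2.2 g.1 (by rw [← h1]; simpa using hm)
    · -- the E-part
      have hεE' : (CTree.node (DG.cut A B eW eE) ε eW eE GW GE).dist Y XDir.E
          = if eW = GW.dist Y XDir.E then GE.dist Y XDir.E else GW.dist Y XDir.E := hεE Y
      rw [show (CTree.node (DG.cut A B eW eE) ε eW eE GW GE).rootGraph = DG.cut A B eW eE
        from rfl, hεE']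
      by_cases heq : eW = GW.dist Y XDir.E
      · rw [if_pos heq]
        obtain ⟨⟨hm, hv2, hvout⟩, c, hin⟩ := (ihE).2
        set g := GE.dist Y XDir.E with hg
        have hne : g ≠ eE := by
          intro hc
          exact heE.1.2.2 c (by rw [← hc]; exact hin)
        constructor
        · refine ⟨mem_cut_edges.mpr (Or.inr (Or.inr ⟨hm, hne⟩)), mem_cut_verts.mpr
            ⟨Or.inr hv2, fun hc => hd' (hAo.1 _ heWm).2 (hc ▸ hv2), ?_⟩, ?_⟩
          · intro hc
            exact hvout eE.2 (by rw [hc]; simpa using heEm)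
          · intro x hx
            rcases mem_cut_edges.mp hx with h | h | h
            · have h1 : g.2 = eW.1 := (Prod.ext_iff.mp h).1
              exact hd' (by rw [h1]; exact (hAo.1 _ heWm).1) hv2
            · exact hd' (hAo.1 _ h.1).1 hv2
            · exact hvout x h.1
        · by_cases hce : (c, g.1) = eE
          · exact ⟨eW.1, mem_cut_edges.mpr (Or.inl
              (congrArg (Prod.mk eW.1) (congrArg Prod.snd hce)))⟩
          · exact ⟨c, mem_cut_edges.mpr (Or.inr (Or.inr ⟨hin, hce⟩))⟩
      · rw [if_neg heq]
        obtain ⟨⟨hm, hv2, hvout⟩, c, hin⟩ := (ihW).2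
        set g := GW.dist Y XDir.E with hg
        have hne : g ≠ eW := fun hc => heq hc.symm
        constructor
        · refine ⟨mem_cut_edges.mpr (Or.inr (Or.inl ⟨hm, hne⟩)), mem_cut_verts.mpr
            ⟨Or.inl hv2, ?_, fun hc => hd' (hc ▸ hv2) (hBo.1 _ heEm).1⟩, ?_⟩
          · intro hc
            exact hne (eq_of_funcE heW hm hc)
          · intro x hx
            rcases mem_cut_edges.mp hx with h | h | h
            · refine hvout eW.2 ?_
              have : g.2 = eW.1 := (Prod.ext_iff.mp h).1
              rw [this]; simpa using heWm
            · exact hvout x h.1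
            · exact hd' hv2 (hBo.1 _ h.1).1
        · refine ⟨c, mem_cut_edges.mpr (Or.inr (Or.inl ⟨hin, ?_⟩))⟩
          intro hc
          have h2 : g.1 = eW.2 := (Prod.ext_iff.mp hc).2
          exact heW.1.2.2 g.2 (by rw [← h2]; simpa using hm)

end PCAux

namespace PCAux

open DG

lemma mkNode_rootGraph (GW GE : CTree) (eW eE : ℕ × ℕ) :
    (mkNode GW GE eW eE).rootGraph = DG.cut GW.rootGraph GE.rootGraph eW eE := rfl

lemma mkNode_dist_W (GW GE : CTree) (eW eE : ℕ × ℕ) (Y : YDir) :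
    (mkNode GW GE eW eE).dist Y XDir.W =
      if eE = GE.dist Y XDir.W then GW.dist Y XDir.W else GE.dist Y XDir.W := rfl

lemma mkNode_dist_E (GW GE : CTree) (eW eE : ℕ × ℕ) (Y : YDir) :
    (mkNode GW GE eW eE).dist Y XDir.E =
      if eW = GW.dist Y XDir.E then GE.dist Y XDir.E else GW.dist Y XDir.E := rfl

lemma mkNode_construction_iff (GW GE : CTree) (eW eE : ℕ × ℕ) :
    IsConstruction (mkNode GW GE eW eE) ↔
      IsConstruction GW ∧ IsConstruction GE ∧
      Disjoint GW.rootGraph.verts GE.rootGraph.verts ∧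
      GW.rootGraph.funcEEdge eW ∧ GE.rootGraph.funcWEdge eE ∧
      ∀ Y : YDir, eW = GW.dist Y XDir.E ∨ eE = GE.dist Y XDir.W := by
  constructor
  · intro h
    cases h with
    | node D' ε' eW' eE' GW' GE' hW hE hdisj heW heE hD hXYC hεW hεE =>
      exact ⟨hW, hE, hdisj, heW, heE, hXYC⟩
  · rintro ⟨h1, h2, h3, h4, h5, h6⟩
    exact IsConstruction.node _ _ _ _ _ _ h1 h2 h3 h4 h5 rfl h6 (fun Y => rfl) (fun Y => rfl)

end PCAux

/-- Proposition 2.1. -/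
theorem prop_2_1 (P Q R : CTree)
    (hP : IsConstruction P) (hQ : IsConstruction Q) (hR : IsConstruction R)
    (hPQ : Disjoint P.rootGraph.verts Q.rootGraph.verts)
    (hPR : Disjoint P.rootGraph.verts R.rootGraph.verts)
    (hQR : Disjoint Q.rootGraph.verts R.rootGraph.verts)
    (eW fW eE fE : ℕ × ℕ)
    (heW : P.rootGraph.isEEdge eW) (hfW : Q.rootGraph.isEEdge fW)
    (heE : Q.rootGraph.isWEdge eE) (hfE : R.rootGraph.isWEdge fE) :
    (IsConstruction (mkNode (mkNode P Q eW eE) R fW fE) ↔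
      IsConstruction (mkNode P (mkNode Q R fW fE) eW eE)) ∧
    (mkNode (mkNode P Q eW eE) R fW fE).rootGraph =
      (mkNode P (mkNode Q R fW fE) eW eE).rootGraph ∧
    ∀ (Y : YDir) (X : XDir),
      (mkNode (mkNode P Q eW eE) R fW fE).dist Y X =
        (mkNode P (mkNode Q R fW fE) eW eE).dist Y X := by
  have oP := PCAux.oriented_of_construction hP
  have oQ := PCAux.oriented_of_construction hQ
  have oR := PCAux.oriented_of_construction hR
  have wP := PCAux.wef_of_construction hP
  have wQ := PCAux.wef_of_construction hQ
  have wR := PCAux.wef_of_construction hR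
  have dPQ := Finset.disjoint_left.mp hPQ
  have dPR := Finset.disjoint_left.mp hPR
  have dQR := Finset.disjoint_left.mp hQR
  have heWm : eW ∈ P.rootGraph.edges := heW.1
  have heW2 : eW.2 ∈ P.rootGraph.verts := heW.2.1
  have heW1 : eW.1 ∈ P.rootGraph.verts := (oP.1 _ heWm).1
  have heEm : eE ∈ Q.rootGraph.edges := heE.1
  have heE1 : eE.1 ∈ Q.rootGraph.verts := heE.2.1
  have heE2 : eE.2 ∈ Q.rootGraph.verts := (oQ.1 _ heEm).2
  have hfWm : fW ∈ Q.rootGraph.edges := hfW.1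
  have hfW2 : fW.2 ∈ Q.rootGraph.verts := hfW.2.1
  have hfW1 : fW.1 ∈ Q.rootGraph.verts := (oQ.1 _ hfWm).1
  have hfEm : fE ∈ R.rootGraph.edges := hfE.1
  have hfE1 : fE.1 ∈ R.rootGraph.verts := hfE.2.1
  have hfE2 : fE.2 ∈ R.rootGraph.verts := (oR.1 _ hfEm).2
  have feW : P.rootGraph.funcEEdge eW := wP.2 eW heW
  have feE : Q.rootGraph.funcWEdge eE := wQ.1 eE heE
  have ffW : Q.rootGraph.funcEEdge fW := wQ.2 fW hfW
  have ffE : R.rootGraph.funcWEdge fE := wR.1 fE hfE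
  have hRdW1 : ∀ Y : YDir, (R.dist Y XDir.W).1 ∈ R.rootGraph.verts :=
    fun Y => ((PCAux.dist_spec hR Y).1.1).2.1
  have hPdE2 : ∀ Y : YDir, (P.dist Y XDir.E).2 ∈ P.rootGraph.verts :=
    fun Y => ((PCAux.dist_spec hP Y).2.1).2.1
  refine ⟨?_, ?_, ?_⟩
  · -- the construction equivalence
    constructor
    · intro h1
      rw [PCAux.mkNode_construction_iff] at h1
      obtain ⟨hPQc, hRc, hdisj1, hfWc, hfEc, hXYC2⟩ := h1
      rw [PCAux.mkNode_construction_iff] at hPQc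
      obtain ⟨-, -, -, -, -, hXYC1⟩ := hPQc
      rw [PCAux.mkNode_rootGraph] at hfWc
      -- fW survives in the first cut, so fW ≠ eE
      have hne : fW ≠ eE := by
        rcases PCAux.mem_cut_edges.mp hfWc.1.1 with h | h | h
        · exact absurd hfW1 (by
            rw [show fW.1 = eW.1 from (Prod.ext_iff.mp h).1]; exact dPQ heW1)
        · exact absurd hfW2 (dPQ (oP.1 _ h.1).2)
        · exact h.2
      rw [PCAux.mkNode_construction_iff]
      refine ⟨hP, ?_, ?_, feW, ?_, ?_⟩
      · -- Q[fW-fE]R is a construction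
        rw [PCAux.mkNode_construction_iff]
        refine ⟨hQ, hR, hQR, ffW, ffE, ?_⟩
        intro Y
        rcases hXYC2 Y with h | h
        · rw [PCAux.mkNode_dist_E] at h
          by_cases he : eW = P.dist Y XDir.E
          · rw [if_pos he] at h; exact Or.inl h
          · rw [if_neg he] at h
            exact absurd hfW2 (dPQ (by rw [h]; exact hPdE2 Y))
        · exact Or.inr h
      · -- disjointness of P and Q[fW-fE]R
        rw [Finset.disjoint_left]
        intro a ha hm
        rw [PCAux.mkNode_rootGraph] at hm
        rcases (PCAux.mem_cut_verts.mp hm).1 with h | h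
        · exact dPQ ha h
        · exact dPR ha h
      · -- eE is a functional W-edge of Q[fW-fE]R
        rw [PCAux.mkNode_rootGraph]
        have hmem : eE ∈ (DG.cut Q.rootGraph R.rootGraph fW fE).edges :=
          PCAux.mem_cut_edges.mpr (Or.inr (Or.inl ⟨heEm, fun hc => hne hc.symm⟩))
        refine ⟨⟨hmem, PCAux.mem_cut_verts.mpr ⟨Or.inl heE1, ?_,
            fun hc => dQR heE1 (by rw [hc]; exact hfE1)⟩, ?_⟩, ?_⟩
        · intro hc
          exact heE.2.2 fW.1 (by rw [hc]; simpa using hfWm)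
        · intro x hx
          rcases PCAux.mem_cut_edges.mp hx with h | h | h
          · exact dQR heE1 (by
              rw [show eE.1 = fE.2 from (Prod.ext_iff.mp h).2]; exact hfE2)
          · exact heE.2.2 x h.1
          · exact dQR heE1 (oR.1 _ h.1).2
        · intro c hc
          rcases PCAux.mem_cut_edges.mp hc with h | h | h
          · exact absurd (PCAux.eq_of_funcW feE hfWm (Prod.ext_iff.mp h).1.symm).symm
              (fun hcc => hne hcc.symm)
          · exact feE.2 c h.1
          · exact absurd (oR.1 _ h.1).1 (fun hm' => dQR heE1 hm')
      · -- the condition (XYC) at the top node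
        intro Y
        rcases hXYC1 Y with h | h
        · exact Or.inl h
        · by_cases hf : fE = R.dist Y XDir.W
          · right; rw [PCAux.mkNode_dist_W, if_pos hf]; exact h
          · rcases hXYC2 Y with h2 | h2
            · rw [PCAux.mkNode_dist_E] at h2
              by_cases he : eW = P.dist Y XDir.E
              · exact Or.inl he
              · rw [if_neg he] at h2
                exact absurd hfW2 (dPQ (by rw [h2]; exact hPdE2 Y))
            · exact absurd h2 hf
    · intro h2
      rw [PCAux.mkNode_construction_iff] at h2
      obtain ⟨hPc, hQRc, hdisj2, heWc, heEc, hXYCb2⟩ := h2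
      rw [PCAux.mkNode_construction_iff] at hQRc
      obtain ⟨-, -, -, -, -, hXYCb1⟩ := hQRc
      rw [PCAux.mkNode_rootGraph] at heEc
      -- eE survives in the cut Q[fW-fE]R, so eE ≠ fW
      have hne : eE ≠ fW := by
        rcases PCAux.mem_cut_edges.mp heEc.1.1 with h | h | h
        · exact absurd (show fE.2 ∈ Q.rootGraph.verts by
            rw [← show eE.2 = fE.2 from (Prod.ext_iff.mp h).2]; exact heE2)
            (fun hm' => dQR hm' hfE2)
        · exact h.2
        · exact absurd heE1 (fun hm' => dQR hm' (oR.1 _ h.1).1)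
      rw [PCAux.mkNode_construction_iff]
      refine ⟨?_, hR, ?_, ?_, ffE, ?_⟩
      · -- P[eW-eE]Q is a construction
        rw [PCAux.mkNode_construction_iff]
        refine ⟨hP, hQ, hPQ, feW, feE, ?_⟩
        intro Y
        rcases hXYCb2 Y with h | h
        · exact Or.inl h
        · rw [PCAux.mkNode_dist_W] at h
          by_cases hf : fE = R.dist Y XDir.W
          · rw [if_pos hf] at h; exact Or.inr h
          · rw [if_neg hf] at h
            exact absurd heE1 (by rw [h]; exact fun hm' => dQR hm' (hRdW1 Y))
      · -- disjointness of P[eW-eE]Q and R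
        rw [Finset.disjoint_left]
        intro a ha hm
        rw [PCAux.mkNode_rootGraph] at ha
        rcases (PCAux.mem_cut_verts.mp ha).1 with h | h
        · exact dPR h hm
        · exact dQR h hm
      · -- fW is a functional E-edge of P[eW-eE]Q
        rw [PCAux.mkNode_rootGraph]
        have hmem : fW ∈ (DG.cut P.rootGraph Q.rootGraph eW eE).edges :=
          PCAux.mem_cut_edges.mpr (Or.inr (Or.inr ⟨hfWm, fun hc => hne hc.symm⟩))
        refine ⟨⟨hmem, PCAux.mem_cut_verts.mpr ⟨Or.inr hfW2,
            fun hc => dPQ (show fW.2 ∈ P.rootGraph.verts by rw [hc]; exact heW2) hfW2,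
            fun hc => heE.2.2 fW.1 (by rw [← hc]; simpa using hfWm)⟩, ?_⟩, ?_⟩
        · intro b hb
          rcases PCAux.mem_cut_edges.mp hb with h | h | h
          · have h1 : fW.2 = eW.1 := (Prod.ext_iff.mp h).1
            exact dPQ (by rw [h1]; exact heW1) hfW2
          · exact dPQ (oP.1 _ h.1).1 hfW2
          · exact hfW.2.2 b h.1
        · intro c hc
          rcases PCAux.mem_cut_edges.mp hc with h | h | h
          · have h2 : fW.2 = eE.2 := (Prod.ext_iff.mp h).2
            exact absurd (PCAux.eq_of_funcE ffW heEm h2.symm) hne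
          · exact absurd (oP.1 _ h.1).2 (fun hm' => dPQ hm' hfW2)
          · exact ffW.2 c h.1
      · -- the condition (XYC) at the top node
        intro Y
        rcases hXYCb1 Y with h | h
        · by_cases he : eW = P.dist Y XDir.E
          · left; rw [PCAux.mkNode_dist_E, if_pos he]; exact h
          · rcases hXYCb2 Y with h2 | h2
            · exact absurd h2 he
            · rw [PCAux.mkNode_dist_W] at h2
              by_cases hf : fE = R.dist Y XDir.W
              · exact Or.inr hf
              · rw [if_neg hf] at h2
                exact absurd heE1 (by rw [h2]; exact fun hm' => dQR hm' (hRdW1 Y))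
        · exact Or.inr h
  · -- equality of the root graphs
    show DG.cut (DG.cut P.rootGraph Q.rootGraph eW eE) R.rootGraph fW fE =
      DG.cut P.rootGraph (DG.cut Q.rootGraph R.rootGraph fW fE) eW eE
    refine PCAux.DG_ext ?_ ?_
    · ext a
      simp only [PCAux.mem_cut_verts]
      have t1 : a = eW.2 → a ∉ R.rootGraph.verts := by rintro rfl; exact dPR heW2
      have t2 : a = eE.1 → a ∉ R.rootGraph.verts := by rintro rfl; exact dQR heE1
      have t3 : a = fW.2 → a ∉ P.rootGraph.verts := by rintro rfl; exact fun hm => dPQ hm hfW2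
      have t4 : a = fE.1 → a ∉ P.rootGraph.verts := by rintro rfl; exact fun hm => dPR hm hfE1
      constructor
      · rintro ⟨⟨hpq, h1, h2⟩ | hr, h3, h4⟩
        · exact ⟨hpq.elim Or.inl (fun hq => Or.inr ⟨Or.inl hq, h3, h4⟩), h1, h2⟩
        · exact ⟨Or.inr ⟨Or.inr hr, h3, h4⟩, fun hc => t1 hc hr, fun hc => t2 hc hr⟩
      · rintro ⟨hp | ⟨hqr, h3, h4⟩, h1, h2⟩
        · exact ⟨Or.inl ⟨Or.inl hp, h1, h2⟩, fun hc => t3 hc hp, fun hc => t4 hc hp⟩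
        · exact ⟨hqr.elim (fun hq => Or.inl ⟨Or.inr hq, h1, h2⟩) Or.inr, h3, h4⟩
    · ext e
      simp only [PCAux.mem_cut_edges]
      have u1 : e = (eW.1, eE.2) → e ≠ fW := by
        rintro rfl hc
        have h1 : eW.1 = fW.1 := (Prod.ext_iff.mp hc).1
        exact dPQ heW1 (by rw [h1]; exact hfW1)
      have u2 : e ∈ P.rootGraph.edges → e ≠ fW := by
        intro hm hc
        have h2 : fW.2 ∈ P.rootGraph.verts := by rw [← hc]; exact (oP.1 _ hm).2
        exact dPQ h2 hfW2
      have u3 : e ∈ R.rootGraph.edges → e ≠ eE := by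
        intro hm hc
        have h1 : eE.1 ∈ R.rootGraph.verts := by rw [← hc]; exact (oR.1 _ hm).1
        exact dQR heE1 h1
      have u4 : e = (fW.1, fE.2) → e ≠ eE := by
        rintro rfl hc
        have h2 : fE.2 = eE.2 := (Prod.ext_iff.mp hc).2
        exact dQR heE2 (by rw [← h2]; exact hfE2)
      constructor
      · rintro (h | ⟨h | ⟨hm, hne⟩ | ⟨hm, hne⟩, hfw⟩ | ⟨hm, hne⟩)
        · exact Or.inr (Or.inr ⟨Or.inl h, u4 h⟩)
        · exact Or.inl h
        · exact Or.inr (Or.inl ⟨hm, hne⟩)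
        · exact Or.inr (Or.inr ⟨Or.inr (Or.inl ⟨hm, hfw⟩), hne⟩)
        · exact Or.inr (Or.inr ⟨Or.inr (Or.inr ⟨hm, hne⟩), u3 hm⟩)
      · rintro (h | ⟨hm, hne⟩ | ⟨h | ⟨hm, hne⟩ | ⟨hm, hne⟩, hee⟩)
        · exact Or.inr (Or.inl ⟨Or.inl h, u1 h⟩)
        · exact Or.inr (Or.inl ⟨Or.inr (Or.inl ⟨hm, hne⟩), u2 hm⟩)
        · exact Or.inl h
        · exact Or.inr (Or.inl ⟨Or.inr (Or.inr ⟨hm, hee⟩), hne⟩)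
        · exact Or.inr (Or.inr ⟨hm, hne⟩)
  · -- equality of the distinguished edges
    intro Y X
    cases X with
    | W =>
      simp only [PCAux.mkNode_dist_W]
      by_cases hf : fE = R.dist Y XDir.W
      · simp [hf]
      · have hne2 : ¬ eE = R.dist Y XDir.W := fun h =>
          dQR heE1 (by rw [h]; exact hRdW1 Y)
        simp [hf, hne2]
    | E =>
      simp only [PCAux.mkNode_dist_E]
      by_cases he : eW = P.dist Y XDir.E
      · simp [he]
      · have hne2 : ¬ fW = P.dist Y XDir.E := fun h =>
          dPQ (by rw [h]; exact hPdE2 Y) hfW2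
        simp [he, hne2]

end PluralCuts
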